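/- arXiv:1007.2282 — 3 statements merged into one kernel-verified Lean document; each statement's English description precedes it below -/
import Mathlib

section
/- Let c be an acyclic partial edge coloring of G with edge e = ab uncolored. If a color β is a candidate for e (no edge adjacent to e is colored β) and (F_a ∩ F_b) \ {c(a,b)} = S_{ab} ∩ S_{ba} = ∅, then assigning β to e yields an acyclic proper partial edge coloring. -/
open SimpleGraph

/-- Property A: every induced subgraph `H` satisfies `|E(H)| ≤ 2|V(H)| - 1`. -/
def PropertyA {V : Type*} (G : SimpleGraph V) : Prop :=
  ∀ s : Set V, (G.induce s).edgeSet.ncard ≤ 2 * s.ncard - 1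

/-- `H` is a minor of `G`: branch sets are disjoint, connected, and adjacency is represented. -/
def IsMinor {W V : Type*} (H : SimpleGraph W) (G : SimpleGraph V) : Prop :=
  ∃ f : W → Set V,
    (∀ w, (G.induce (f w)).Connected) ∧
    (∀ w₁ w₂, w₁ ≠ w₂ → Disjoint (f w₁) (f w₂)) ∧
    (∀ w₁ w₂, H.Adj w₁ w₂ → ∃ a ∈ f w₁, ∃ b ∈ f w₂, G.Adj a b)

/-- Planarity via Wagner's theorem: no `K₅` minor and no `K₃,₃` minor. -/
def IsPlanar {V : Type*} (G : SimpleGraph V) : Prop :=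
  ¬ IsMinor (completeGraph (Fin 5)) G ∧
  ¬ IsMinor (completeBipartiteGraph (Fin 3) (Fin 3)) G

/-- A proper edge coloring: distinct edges sharing a vertex get distinct colors. -/
def IsProperEdgeColoring {V β : Type*} (G : SimpleGraph V) (c : Sym2 V → β) : Prop :=
  ∀ e ∈ G.edgeSet, ∀ f ∈ G.edgeSet, e ≠ f → (∃ v, v ∈ e ∧ v ∈ f) → c e ≠ c f

/-- An acyclic edge coloring: proper and no cycle uses only two colors. -/
def IsAcyclicEdgeColoring {V β : Type*} (G : SimpleGraph V) (c : Sym2 V → β) : Prop :=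
  IsProperEdgeColoring G c ∧
    ∀ (γ δ : β) (v : V) (p : G.Walk v v), p.IsCycle →
      ¬ ∀ e ∈ p.edges, c e = γ ∨ c e = δ

/-- `G` admits an acyclic edge coloring with at most `k` colors. -/
def AcyclicallyEdgeColorable {V : Type*} (G : SimpleGraph V) (k : ℕ) : Prop :=
  ∃ c : Sym2 V → Fin k, IsAcyclicEdgeColoring G c

/-- A proper partial edge coloring (uncolored edges get `none`). -/
def IsProperPartialEdgeColoring {V : Type*} (G : SimpleGraph V) (c : Sym2 V → Option ℕ) : Prop :=
  ∀ e ∈ G.edgeSet, ∀ f ∈ G.edgeSet, e ≠ f → (∃ v, v ∈ e ∧ v ∈ f) →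
    ∀ γ : ℕ, c e = some γ → c f ≠ some γ

/-- There is a cycle all of whose edges are colored with one of two colors. -/
def HasBichromaticCycle {V : Type*} (G : SimpleGraph V) (c : Sym2 V → Option ℕ) : Prop :=
  ∃ (γ δ : ℕ) (v : V) (p : G.Walk v v), p.IsCycle ∧
    ∀ e ∈ p.edges, c e = some γ ∨ c e = some δ

/-- A valid (acyclic proper) partial edge coloring. -/
def IsAcyclicPartialEdgeColoring {V : Type*} (G : SimpleGraph V) (c : Sym2 V → Option ℕ) : Prop :=
  IsProperPartialEdgeColoring G c ∧ ¬ HasBichromaticCycle G c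

/-- `F_a`: the set of colors appearing on edges incident to `a`. -/
def colorsAt {V : Type*} (G : SimpleGraph V) (c : Sym2 V → Option ℕ) (a : V) : Set ℕ :=
  {γ | ∃ z, G.Adj a z ∧ c s(a, z) = some γ}

/-- `S_{ab} = F_b \ {c(a,b)}`. -/
def Sset {V : Type*} (G : SimpleGraph V) (c : Sym2 V → Option ℕ) (a b : V) : Set ℕ :=
  colorsAt G c b \ {γ | c s(a, b) = some γ}

/-- A maximal `(γ,δ)`-bichromatic path: a path all of whose edges are colored `γ` or `δ`,
which cannot be extended at either end by a `γ`- or `δ`-colored edge. -/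
def IsMaxBichromaticPath {V : Type*} (G : SimpleGraph V) (c : Sym2 V → Option ℕ)
    (γ δ : ℕ) {x y : V} (p : G.Walk x y) : Prop :=
  p.IsPath ∧ (∀ e ∈ p.edges, c e = some γ ∨ c e = some δ) ∧
    ∀ e ∈ G.edgeSet, (x ∈ e ∨ y ∈ e) → (c e = some γ ∨ c e = some δ) → e ∈ p.edges

/-- A `(γ,δ,ab)`-critical path: a maximal `(γ,δ)`-bichromatic path from `a` to `b`
whose first and last edges are colored `γ`. -/
def IsCriticalPath {V : Type*} (G : SimpleGraph V) (c : Sym2 V → Option ℕ)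
    (γ δ : ℕ) (a b : V) (p : G.Walk a b) : Prop :=
  IsMaxBichromaticPath G c γ δ p ∧
    (∃ e, p.edges.head? = some e ∧ c e = some γ) ∧
    (∃ e, p.edges.getLast? = some e ∧ c e = some γ)

/-!
A proper coloring is kept proper because `β` is missing at both ends of `ab`. A bichromatic
cycle of the new coloring must pass through `ab`, so one of its two colors is `β`; the cycle
leaves `a` and `b` along two further edges, which cannot be colored `β` and so carry the other
color `δ`. Then `δ ∈ F_a ∩ F_b`, and as `ab` is uncolored this contradicts
`S_{ab} ∩ S_{ba} = ∅`.
-/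

theorem List.exists_mem_ne_of_even_countP {α : Type*} [DecidableEq α] {l : List α}
    {q : α → Bool} {e : α} (hl : l.Nodup) (he : e ∈ l) (hq : q e) (hev : Even (l.countP q)) :
    ∃ e' ∈ l, e' ≠ e ∧ q e' := by
  by_contra! h
  have hcount : l.countP q = l.count e := by
    rw [List.count, List.countP_congr]
    intro x hx
    simp only [beq_iff_eq]
    exact ⟨fun hqx => by_contra fun hne => h x hx hne hqx, fun hxe => hxe ▸ hq⟩
  rw [hcount, List.count_eq_one_of_mem hl he] at hev
  exact Nat.not_even_one hev

theorem SimpleGraph.Walk.IsTrail.exists_mem_edges_ne_of_closed {V : Type*} [DecidableEq V]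
    {G : SimpleGraph V} {v x : V} {p : G.Walk v v} (hp : p.IsTrail) {e : Sym2 V}
    (he : e ∈ p.edges) (hx : x ∈ e) : ∃ e' ∈ p.edges, e' ≠ e ∧ x ∈ e' := by
  have hev := (hp.even_countP_edges_iff x).mpr (absurd rfl)
  simpa using List.exists_mem_ne_of_even_countP hp.edges_nodup he (by simpa using hx) hev

section PartialEdgeColoring

variable {V : Type*} {G : SimpleGraph V} {c : Sym2 V → Option ℕ}

theorem mem_colorsAt_of_mem {e : Sym2 V} (he : e ∈ G.edgeSet) {v : V} (hv : v ∈ e) {γ : ℕ}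
    (hγ : c e = some γ) : γ ∈ colorsAt G c v := by
  induction e with
  | _ x y =>
    rcases Sym2.mem_iff.mp hv with rfl | rfl
    · exact ⟨y, he, hγ⟩
    · exact ⟨x, G.adj_symm he, by rwa [Sym2.eq_swap]⟩

theorem disjoint_colorsAt_of_Sset_inter_eq_empty {a b : V} (hun : c s(a, b) = none)
    (hdisj : Sset G c a b ∩ Sset G c b a = ∅) : Disjoint (colorsAt G c a) (colorsAt G c b) := by
  rw [Set.disjoint_iff]
  intro δ ⟨ha, hb⟩
  rw [← hdisj]
  exact ⟨⟨hb, by simp [hun]⟩, ⟨ha, by simp [Sym2.eq_swap, hun]⟩⟩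

theorem IsProperPartialEdgeColoring.update [DecidableEq V] (hc : IsProperPartialEdgeColoring G c)
    {a b : V} {β : ℕ} (hβa : β ∉ colorsAt G c a) (hβb : β ∉ colorsAt G c b) :
    IsProperPartialEdgeColoring G (Function.update c s(a, b) (some β)) := by
  have hβ : ∀ {e : Sym2 V}, e ∈ G.edgeSet → (∃ v ∈ s(a, b), v ∈ e) → c e ≠ some β := by
    rintro e he ⟨v, hv, hve⟩ hce
    rcases Sym2.mem_iff.mp hv with rfl | rfl
    · exact hβa (mem_colorsAt_of_mem he hve hce)
    · exact hβb (mem_colorsAt_of_mem he hve hce)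
  intro e he f hf hef ⟨v, hve, hvf⟩ γ hγe hγf
  by_cases he' : e = s(a, b)
  · subst he'
    rw [Function.update_self, Option.some_inj] at hγe
    rw [Function.update_of_ne (Ne.symm hef), ← hγe] at hγf
    exact hβ hf ⟨v, hve, hvf⟩ hγf
  by_cases hf' : f = s(a, b)
  · subst hf'
    rw [Function.update_self, Option.some_inj] at hγf
    rw [Function.update_of_ne hef, ← hγf] at hγe
    exact hβ he ⟨v, hvf, hve⟩ hγe
  rw [Function.update_of_ne he'] at hγe
  rw [Function.update_of_ne hf'] at hγf
  exact hc e he f hf hef ⟨v, hve, hvf⟩ γ hγe hγf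

theorem SimpleGraph.Walk.IsCycle.mem_colorsAt_of_bichromatic [DecidableEq V] {u : V}
    {p : G.Walk u u} (hp : p.IsCycle) {e : Sym2 V} (he : e ∈ p.edges) {x : V} (hx : x ∈ e)
    {β δ : ℕ} (hβ : β ∉ colorsAt G c x)
    (hcol : ∀ e' ∈ p.edges, e' ≠ e → c e' = some β ∨ c e' = some δ) :
    δ ∈ colorsAt G c x := by
  obtain ⟨e', he'p, he'e, hxe'⟩ := hp.isTrail.exists_mem_edges_ne_of_closed he hx
  have he'G := p.edges_subset_edgeSet he'p
  rcases hcol e' he'p he'e with hc' | hc'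
  · exact absurd (mem_colorsAt_of_mem he'G hxe' hc') hβ
  · exact mem_colorsAt_of_mem he'G hxe' hc'

theorem not_hasBichromaticCycle_update [DecidableEq V] (hc : ¬ HasBichromaticCycle G c)
    {a b : V} {β : ℕ} (hβa : β ∉ colorsAt G c a) (hβb : β ∉ colorsAt G c b)
    (hdisj : Disjoint (colorsAt G c a) (colorsAt G c b)) :
    ¬ HasBichromaticCycle G (Function.update c s(a, b) (some β)) := by
  rintro ⟨γ, δ, v, p, hp, hcol⟩
  have hold : ∀ e ∈ p.edges, e ≠ s(a, b) → c e = some γ ∨ c e = some δ := fun e he hne => by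
    simpa only [Function.update_of_ne hne] using hcol e he
  by_cases hin : s(a, b) ∈ p.edges
  · suffices ∀ δ', (∀ e ∈ p.edges, e ≠ s(a, b) → c e = some β ∨ c e = some δ') → False by
      rcases hcol _ hin with h | h <;> rw [Function.update_self, Option.some_inj] at h <;> subst h
      · exact this δ hold
      · exact this γ fun e he hne => (hold e he hne).symm
    intro δ' hold'
    exact Set.disjoint_left.mp hdisj
      (hp.mem_colorsAt_of_bichromatic hin (Sym2.mem_mk_left a b) hβa hold')
      (hp.mem_colorsAt_of_bichromatic hin (Sym2.mem_mk_right a b) hβb hold')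
  · exact hc ⟨γ, δ, v, p, hp, fun e he => hold e he (ne_of_mem_of_not_mem he hin)⟩

end PartialEdgeColoring

theorem candidate_valid_of_disjoint_general {V : Type*} [DecidableEq V] (G : SimpleGraph V)
    (c : Sym2 V → Option ℕ) (a b : V)
    (hc : IsAcyclicPartialEdgeColoring G c) (hun : c s(a, b) = none)
    (β : ℕ) (hcand : β ∉ colorsAt G c a ∪ colorsAt G c b)
    (hdisj : Sset G c a b ∩ Sset G c b a = ∅) :
    IsAcyclicPartialEdgeColoring G (Function.update c s(a, b) (some β)) := by
  obtain ⟨hβa, hβb⟩ := not_or.mp hcand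
  exact ⟨hc.1.update hβa hβb, not_hasBichromaticCycle_update hc.2 hβa hβb
    (disjoint_colorsAt_of_Sset_inter_eq_empty hun hdisj)⟩

/-- if `β` is a candidate color for the uncolored edge `ab` and
`S_{ab} ∩ S_{ba} = ∅` (equivalently `(F_a ∩ F_b) \ {c(a,b)} = ∅`), then assigning `β`
to `ab` yields an acyclic proper partial edge coloring. -/
theorem candidate_valid_of_disjoint {V : Type*} [DecidableEq V] (G : SimpleGraph V)
    (c : Sym2 V → Option ℕ) (a b : V) (hab : G.Adj a b)
    (hc : IsAcyclicPartialEdgeColoring G c) (hun : c s(a, b) = none)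
    (β : ℕ) (hcand : β ∉ colorsAt G c a ∪ colorsAt G c b)
    (hdisj : Sset G c a b ∩ Sset G c b a = ∅) :
    IsAcyclicPartialEdgeColoring G (Function.update c s(a, b) (some β)) :=
  candidate_valid_of_disjoint_general G c a b hc hun β hcand hdisj
end

section
/- Let G be a simple graph with |E(G)| ≤ 2|V(G)| − 1 and minimum degree δ(G) ≥ 2. Then there exists a vertex v of degree k such that one of the following holds: (B1) k = 2; (B2) k = 3 and at least two neighbours of v have degree at most 4; (B3) k = 5 and at least three neighbours of v have degree at most 3; (B4) k = 6 and at least five neighbours of v have degree at most 3; (B5) k ≥ 7 and at least k neighbours (i.e., all) of v have degree at most 3. -/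
open SimpleGraph

/-- a graph with `m ≤ 2n - 1` and minimum degree at least 2 contains one
of the configurations B1-B5. -/
theorem exists_configuration {V : Type*} [Fintype V] [DecidableEq V] [Nonempty V]
    (G : SimpleGraph V) [DecidableRel G.Adj]
    (hm : G.edgeFinset.card ≤ 2 * Fintype.card V - 1)
    (hmindeg : ∀ v : V, 2 ≤ G.degree v) :
    ∃ v : V,
      G.degree v = 2 ∨
      (G.degree v = 3 ∧ 2 ≤ ((G.neighborFinset v).filter fun u => G.degree u ≤ 4).card) ∨
      (G.degree v = 5 ∧ 3 ≤ ((G.neighborFinset v).filter fun u => G.degree u ≤ 3).card) ∨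
      (G.degree v = 6 ∧ 5 ≤ ((G.neighborFinset v).filter fun u => G.degree u ≤ 3).card) ∨
      (7 ≤ G.degree v ∧ ∀ u ∈ G.neighborFinset v, G.degree u ≤ 3) := by
  by_contra hcon
  push_neg at hcon
  classical
  have hdeg3 : ∀ v, 3 ≤ G.degree v := fun v => by
    have h2 := hmindeg v
    have h := (hcon v).1
    omega
  -- recv v : number of neighbours of v of degree ≥ 5
  -- sent v : number of neighbours of v of degree 3
  set recv : V → ℕ := fun v => ((G.neighborFinset v).filter fun u => 5 ≤ G.degree u).card with hrecv
  set sent : V → ℕ := fun v => ((G.neighborFinset v).filter fun u => G.degree u = 3).card with hsent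
  -- generic expansion: conditional neighbour count as a double sum
  have step : ∀ (P Q : V → Prop) (_ : DecidablePred P) (_ : DecidablePred Q) (v : V),
      (if P v then ((G.neighborFinset v).filter fun u => Q u).card else 0)
        = ∑ u, (if G.Adj v u ∧ P v ∧ Q u then 1 else 0) := by
    intro P Q _ _ v
    by_cases hP : P v
    · rw [if_pos hP, Finset.card_filter, SimpleGraph.neighborFinset_eq_filter,
        Finset.sum_filter]
      refine Finset.sum_congr rfl fun u _ => ?_
      by_cases h1 : G.Adj v u <;> by_cases h2 : Q u <;> simp [h1, h2, hP]
    · simp [hP]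
  -- double counting: total sent equals total received
  have hT : ∑ v, (if G.degree v = 3 then recv v else 0)
      = ∑ v, (if 5 ≤ G.degree v then sent v else 0) := by
    calc ∑ v, (if G.degree v = 3 then recv v else 0)
        = ∑ v, ∑ u, (if G.Adj v u ∧ G.degree v = 3 ∧ 5 ≤ G.degree u then 1 else 0) :=
          Finset.sum_congr rfl fun v _ =>
            step (fun w => G.degree w = 3) (fun w => 5 ≤ G.degree w) _ _ v
      _ = ∑ u, ∑ v, (if G.Adj v u ∧ G.degree v = 3 ∧ 5 ≤ G.degree u then 1 else 0) :=
          Finset.sum_comm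
      _ = ∑ u, (if 5 ≤ G.degree u then sent u else 0) := by
          refine Finset.sum_congr rfl fun u _ => ?_
          rw [step (fun w => 5 ≤ G.degree w) (fun w => G.degree w = 3) _ _ u]
          refine Finset.sum_congr rfl fun v _ => ?_
          refine if_congr ?_ rfl rfl
          rw [G.adj_comm]
          tauto
  -- pointwise charge bound
  have hfb : ∀ v, (if 5 ≤ G.degree v then sent v else 0) + 8
      ≤ 2 * G.degree v + (if G.degree v = 3 then recv v else 0) := by
    intro v
    have hd3 := hdeg3 v
    have hcard := SimpleGraph.card_neighborFinset_eq_degree G v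
    have hcase : G.degree v = 3 ∨ G.degree v = 4 ∨ G.degree v = 5 ∨ G.degree v = 6 ∨
        7 ≤ G.degree v := by omega
    rcases hcase with h | h | h | h | h
    · -- degree 3: at least two neighbours of degree ≥ 5
      rw [if_neg (by omega), if_pos h]
      have hsplit := Finset.card_filter_add_card_filter_not
        (s := G.neighborFinset v) (p := fun u => 5 ≤ G.degree u)
      have hneg : ((G.neighborFinset v).filter fun u => ¬ 5 ≤ G.degree u).card =
          ((G.neighborFinset v).filter fun u => G.degree u ≤ 4).card := by
        congr 1
        apply Finset.filter_congr
        intro u _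
        constructor <;> (intro; omega)
      have hb := (hcon v).2.1 h
      have hr : recv v = ((G.neighborFinset v).filter fun u => 5 ≤ G.degree u).card := rfl
      omega
    · rw [if_neg (by omega), if_neg (by omega)]; omega
    · -- degree 5: at most two neighbours of degree ≤ 3
      rw [if_pos (by omega), if_neg (by omega)]
      have hb := (hcon v).2.2.1 h
      have hle : sent v ≤ ((G.neighborFinset v).filter fun u => G.degree u ≤ 3).card :=
        Finset.card_le_card (Finset.monotone_filter_right _ (fun u hu => by omega))
      omega
    · -- degree 6: at most four neighbours of degree ≤ 3
      rw [if_pos (by omega), if_neg (by omega)]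
      have hb := (hcon v).2.2.2.1 h
      have hle : sent v ≤ ((G.neighborFinset v).filter fun u => G.degree u ≤ 3).card :=
        Finset.card_le_card (Finset.monotone_filter_right _ (fun u hu => by omega))
      omega
    · -- degree ≥ 7: some neighbour has degree ≥ 4
      rw [if_pos (by omega), if_neg (by omega)]
      obtain ⟨u, hu, hu4⟩ := (hcon v).2.2.2.2 h
      have hsplit := Finset.card_filter_add_card_filter_not
        (s := G.neighborFinset v) (p := fun u => G.degree u = 3)
      have hpos : 0 < ((G.neighborFinset v).filter fun u => ¬ G.degree u = 3).card :=
        Finset.card_pos.mpr ⟨u, Finset.mem_filter.mpr ⟨hu, by omega⟩⟩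
      have hs : sent v = ((G.neighborFinset v).filter fun u => G.degree u = 3).card := rfl
      omega
  -- sum everything up
  have h1 : ∑ v, ((if 5 ≤ G.degree v then sent v else 0) + 8)
      ≤ ∑ v, (2 * G.degree v + (if G.degree v = 3 then recv v else 0)) :=
    Finset.sum_le_sum fun v _ => hfb v
  rw [Finset.sum_add_distrib, Finset.sum_add_distrib, Finset.sum_const, ← hT,
    ← Finset.mul_sum, SimpleGraph.sum_degrees_eq_twice_card_edges,
    Finset.card_univ, smul_eq_mul] at h1
  have hn : 1 ≤ Fintype.card V := Fintype.card_pos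
  omega
end

section
/- In a minimum counterexample G (with respect to number of edges) to the statement 'every graph satisfying Property A is acyclically edge colorable with Δ + 3 colors', the set Q of vertices of degree 2 is an independent set. -/
open SimpleGraph

/-! Delete the edge `xy` joining the two degree-2 vertices and color the rest acyclically by
minimality. Give `xy` a color `b` that is missing both at `x` and at the other neighbour `v` of
`y`; at most `2 + Δ` colors are excluded. The result is proper, and a two-colored cycle through
`xy` must continue along `yv` and another edge `vw`, so its two colors would include the three
distinct values `b`, `c(yv)`, `c(vw)`. -/

open Function

namespace SimpleGraph

variable {V α : Type*} {G : SimpleGraph V}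

lemma Walk.IsCycle.exists_ne_mem_edges {u z : V} {p : G.Walk u u} (hp : p.IsCycle)
    (hz : z ∈ p.support) : ∃ w₁ w₂, w₁ ≠ w₂ ∧ s(z, w₁) ∈ p.edges ∧ s(z, w₂) ∈ p.edges := by
  obtain ⟨w₁, w₂, hne, h⟩ := Set.ncard_eq_two.mp (hp.ncard_neighborSet_toSubgraph_eq_two hz)
  have h₁ : w₁ ∈ p.toSubgraph.neighborSet z := by simp [h]
  have h₂ : w₂ ∈ p.toSubgraph.neighborSet z := by simp [h]
  exact ⟨w₁, w₂, hne, Walk.adj_toSubgraph_iff_mem_edges.mp h₁,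
    Walk.adj_toSubgraph_iff_mem_edges.mp h₂⟩

lemma Walk.IsCycle.exists_mem_edges_of_forall_adj_eq_or_eq {r x y v : V} {p : G.Walk r r}
    (hp : p.IsCycle) (hxy : s(x, y) ∈ p.edges) (hy : ∀ z, G.Adj y z → z = x ∨ z = v) :
    v ≠ x ∧ s(y, v) ∈ p.edges ∧ ∃ w ≠ y, s(v, w) ∈ p.edges := by
  obtain ⟨w₁, w₂, hne, h₁, h₂⟩ := hp.exists_ne_mem_edges (p.snd_mem_support_of_mem_edges hxy)
  have hyv : v ≠ x ∧ s(y, v) ∈ p.edges := by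
    rcases hy w₁ (p.adj_of_mem_edges h₁) with rfl | rfl <;>
      rcases hy w₂ (p.adj_of_mem_edges h₂) with rfl | rfl
    · exact absurd rfl hne
    · exact ⟨hne.symm, h₂⟩
    · exact ⟨hne, h₁⟩
    · exact absurd rfl hne
  obtain ⟨w₃, w₄, hne', h₃, h₄⟩ := hp.exists_ne_mem_edges (p.snd_mem_support_of_mem_edges hyv.2)
  refine ⟨hyv.1, hyv.2, ?_⟩
  by_cases hw₃ : w₃ = y
  · exact ⟨w₄, hw₃ ▸ hne'.symm, h₄⟩
  · exact ⟨w₃, hw₃, h₃⟩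

lemma exists_forall_adj_eq_or_eq_of_degree_eq_two {x y : V} [Fintype (G.neighborSet y)]
    (hd : G.degree y = 2) (hyx : G.Adj y x) : ∃ v, ∀ z, G.Adj y z → z = x ∨ z = v := by
  classical
  obtain ⟨a, b, -, hab⟩ := Finset.card_eq_two.mp hd
  have hmem : ∀ z, G.Adj y z → z = a ∨ z = b := fun z hz => by
    simpa [hab] using (G.mem_neighborFinset y z).mpr hz
  rcases hmem x hyx with rfl | rfl
  · exact ⟨b, hmem⟩
  · exact ⟨a, fun z hz => (hmem z hz).symm⟩

lemma exists_color_ne_at [Fintype V] [DecidableRel G.Adj] {k : ℕ} (c : Sym2 V → Fin k)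
    (x v : V) (hk : G.degree x + G.degree v < k) :
    ∃ b, (∀ z, G.Adj x z → c s(x, z) ≠ b) ∧ ∀ w, G.Adj v w → c s(v, w) ≠ b := by
  classical
  set F := (G.neighborFinset x).image (fun z => c s(x, z)) ∪
    (G.neighborFinset v).image (fun w => c s(v, w))
  have hF : F.card < (Finset.univ : Finset (Fin k)).card := calc
    F.card ≤ G.degree x + G.degree v :=
      (Finset.card_union_le _ _).trans (add_le_add Finset.card_image_le Finset.card_image_le)
    _ < k := hk
    _ = _ := (Finset.card_fin k).symm
  obtain ⟨b, -, hb⟩ := Finset.exists_mem_notMem_of_card_lt_card hF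
  refine ⟨b, fun z hz h => hb ?_, fun w hw h => hb ?_⟩
  · exact Finset.mem_union_left _ (Finset.mem_image.mpr ⟨z, by simpa using hz, h⟩)
  · exact Finset.mem_union_right _ (Finset.mem_image.mpr ⟨w, by simpa using hw, h⟩)

variable [DecidableEq V]

lemma IsProperEdgeColoring.update_of_deleteEdges {c : Sym2 V → α} {e₀ : Sym2 V} {b : α}
    (hc : IsProperEdgeColoring (G.deleteEdges {e₀}) c)
    (hb : ∀ f ∈ G.edgeSet, f ≠ e₀ → (∃ v, v ∈ e₀ ∧ v ∈ f) → c f ≠ b) :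
    IsProperEdgeColoring G (update c e₀ b) := by
  intro e he f hf hef hshare
  have mem : ∀ g ∈ G.edgeSet, g ≠ e₀ → g ∈ (G.deleteEdges {e₀}).edgeSet := fun g hg hne => by
    simp [edgeSet_deleteEdges, hg, hne]
  by_cases h₁ : e = e₀ <;> by_cases h₂ : f = e₀
  · exact absurd (h₁.trans h₂.symm) hef
  · subst h₁
    rw [update_self, update_of_ne h₂]
    exact (hb f hf h₂ hshare).symm
  · subst h₂
    rw [update_self, update_of_ne h₁]
    obtain ⟨v, hve, hvf⟩ := hshare
    exact hb e he h₁ ⟨v, hvf, hve⟩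
  · rw [update_of_ne h₁, update_of_ne h₂]
    exact hc e (mem e he h₁) f (mem f hf h₂) hef hshare

lemma IsAcyclicEdgeColoring.not_twoColored_update_of_notMem {c : Sym2 V → α} {e₀ : Sym2 V}
    {b γ δ : α} {r : V} (hc : IsAcyclicEdgeColoring (G.deleteEdges {e₀}) c) {p : G.Walk r r}
    (hp : p.IsCycle) (he₀ : e₀ ∉ p.edges) :
    ¬ ∀ e ∈ p.edges, update c e₀ b e = γ ∨ update c e₀ b e = δ := by
  intro hcol
  have hp' : ∀ e ∈ p.edges, e ∉ ({e₀} : Set (Sym2 V)) := fun e he h => he₀ (h ▸ he)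
  refine hc.2 γ δ r (p.toDeleteEdges _ hp') (hp.toDeleteEdges _ _ hp') fun e he => ?_
  rw [Walk.toDeleteEdges, Walk.edges_transfer] at he
  have hne : e ≠ e₀ := fun h => he₀ (h ▸ he)
  simpa [update_of_ne hne] using hcol e he

lemma IsProperEdgeColoring.not_twoColored_update_of_mem {c : Sym2 V → α} {x y v : V}
    {b γ δ : α} {r : V} (hc : IsProperEdgeColoring (G.deleteEdges {s(x, y)}) c)
    (hy : ∀ z, G.Adj y z → z = x ∨ z = v) (hbv : ∀ w, G.Adj v w → c s(v, w) ≠ b)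
    {p : G.Walk r r} (hp : p.IsCycle) (hxy : s(x, y) ∈ p.edges) :
    ¬ ∀ e ∈ p.edges, update c s(x, y) b e = γ ∨ update c s(x, y) b e = δ := by
  intro hcol
  obtain ⟨hvx, hvy_mem, w, hwy, hvw_mem⟩ := hp.exists_mem_edges_of_forall_adj_eq_or_eq hxy hy
  rw [Sym2.eq_swap] at hvy_mem
  have hvy : G.Adj v y := p.adj_of_mem_edges hvy_mem
  have hvw : G.Adj v w := p.adj_of_mem_edges hvw_mem
  have hvy_ne : s(v, y) ≠ s(x, y) := by grind [Sym2.eq_iff]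
  have hvw_ne : s(v, w) ≠ s(x, y) := by grind [Sym2.eq_iff, hvy.ne]
  have hb : b = γ ∨ b = δ := by simpa using hcol _ hxy
  have hcvy : c s(v, y) = γ ∨ c s(v, y) = δ := by
    simpa [update_of_ne hvy_ne] using hcol _ hvy_mem
  have hcvw : c s(v, w) = γ ∨ c s(v, w) = δ := by
    simpa [update_of_ne hvw_ne] using hcol _ hvw_mem
  have hcvw_ne : c s(v, w) ≠ c s(v, y) :=
    hc _ (deleteEdges_adj.mpr ⟨hvw, hvw_ne⟩) _ (deleteEdges_adj.mpr ⟨hvy, hvy_ne⟩)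
      (fun h => hwy (Sym2.congr_right.mp h)) ⟨v, Sym2.mem_mk_left v w, Sym2.mem_mk_left v y⟩
  have := hbv y hvy
  have := hbv w hvw
  grind

theorem IsAcyclicEdgeColoring.update_of_deleteEdges {c : Sym2 V → α} {x y v : V} {b : α}
    (hc : IsAcyclicEdgeColoring (G.deleteEdges {s(x, y)}) c)
    (hy : ∀ z, G.Adj y z → z = x ∨ z = v)
    (hbx : ∀ z, G.Adj x z → z ≠ y → c s(x, z) ≠ b)
    (hbv : ∀ w, G.Adj v w → c s(v, w) ≠ b) :
    IsAcyclicEdgeColoring G (update c s(x, y) b) := by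
  refine ⟨hc.1.update_of_deleteEdges ?_, fun γ δ r p hp => ?_⟩
  · rintro f hf hne ⟨z, hz, hzf⟩
    obtain ⟨w, rfl⟩ := Sym2.mem_iff_exists.mp hzf
    have hzw : G.Adj z w := hf
    rcases Sym2.mem_iff.mp hz with rfl | rfl
    · exact hbx w hzw (by rintro rfl; exact hne rfl)
    · rcases hy w hzw with rfl | rfl
      · exact absurd Sym2.eq_swap hne
      · rw [Sym2.eq_swap]
        exact hbv z hzw.symm
  · by_cases hxy : s(x, y) ∈ p.edges
    · exact hc.1.not_twoColored_update_of_mem hy hbv hp hxy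
    · exact hc.not_twoColored_update_of_notMem hp hxy

end SimpleGraph

theorem min_counterexample_degree_two_independent_general {V : Type*} [Fintype V] [DecidableEq V]
    (G : SimpleGraph V) [DecidableRel G.Adj]
    (hcex : ¬ AcyclicallyEdgeColorable G (G.maxDegree + 3))
    (hmin : ∀ H : SimpleGraph V, H ≤ G → H ≠ G →
      AcyclicallyEdgeColorable H (G.maxDegree + 3)) :
    ∀ x y : V, G.degree x = 2 → G.degree y = 2 → ¬ G.Adj x y := by
  intro x y hdx hdy hxy
  obtain ⟨v, hy⟩ := G.exists_forall_adj_eq_or_eq_of_degree_eq_two hdy hxy.symm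
  have hne : G.deleteEdges {s(x, y)} ≠ G := fun h =>
    Set.disjoint_singleton_right.mp (deleteEdges_eq_self.mp h) hxy
  obtain ⟨c, hc⟩ := hmin _ (G.deleteEdges_le _) hne
  obtain ⟨b, hbx, hbv⟩ := G.exists_color_ne_at c x v (by
    have := G.degree_le_maxDegree v
    omega)
  exact hcex ⟨_, hc.update_of_deleteEdges hy (fun z hz _ => hbx z hz) hbv⟩

/-- in a minimum counterexample `G` (w.r.t. number of edges) to
"Property A implies `a'(G) ≤ Δ + 3`", the set of degree-2 vertices is independent. -/
theorem min_counterexample_degree_two_independent {V : Type*} [Fintype V] [DecidableEq V]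
    (G : SimpleGraph V) [DecidableRel G.Adj]
    (hA : PropertyA G)
    (hcex : ¬ AcyclicallyEdgeColorable G (G.maxDegree + 3))
    (hmin : ∀ H : SimpleGraph V, H ≤ G → H ≠ G →
      AcyclicallyEdgeColorable H (G.maxDegree + 3)) :
    ∀ x y : V, G.degree x = 2 → G.degree y = 2 → ¬ G.Adj x y :=
  min_counterexample_degree_two_independent_general G hcex hmin
end
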